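/- For every k ≥ 0 such that J_k is nonsingular, with J̃_k := J*(J_k⁻¹ − J*⁻¹), Broyden's 'bad' update satisfies τ_{k+1}² ≤ τ_k² − ‖J*(J_k⁻¹ − H_k)y_k‖²/‖y_k‖² + 2(τ_k‖J̃_k‖ + ‖J̃_k‖²). -/

import Mathlib

open Matrix MeasureTheory

noncomputable def specNorm {n : ℕ} (A : Matrix (Fin n) (Fin n) ℝ) : ℝ :=
  ‖Matrix.toEuclideanCLM (𝕜 := ℝ) A‖

noncomputable def frobNorm {n : ℕ} (A : Matrix (Fin n) (Fin n) ℝ) : ℝ :=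
  Real.sqrt (∑ i, ∑ j, (A i j) ^ 2)

noncomputable def vnorm {n : ℕ} (x : Fin n → ℝ) : ℝ :=
  Real.sqrt (∑ i, (x i) ^ 2)

noncomputable def intJac {n : ℕ} (J : (Fin n → ℝ) → Matrix (Fin n) (Fin n) ℝ)
    (x u : Fin n → ℝ) : Matrix (Fin n) (Fin n) ℝ :=
  Matrix.of fun i j => ∫ t in (0:ℝ)..(1:ℝ), J (x + t • u) i j

/-!
Write `A = J*(H_k - J*⁻¹)`, `B = J*(J_k⁻¹ - J*⁻¹)` and `y = y_k`. Since `u_k = J_k⁻¹ y`, the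
update multiplied by `J*` reads `A₊ = A + w yᵀ / ‖y‖²` with `w = J*(J_k⁻¹ - H_k) y = (B - A) y`.
Expanding the Frobenius norm and substituting `A y = B y - w` gives
`‖A₊‖_F² = ‖A‖_F² - ‖w‖² / ‖y‖² + 2 w·(B y) / ‖y‖²`, and
`w·(B y) = ‖B y‖² - (A y)·(B y) ≤ (‖B‖² + ‖A‖_F ‖B‖) ‖y‖²` by Cauchy–Schwarz. As `0⁻¹ = 0`,
nothing needs `y ≠ 0`: for `y = 0` both correction terms vanish.
-/

lemma vnorm_sq {n : ℕ} (v : Fin n → ℝ) : vnorm v ^ 2 = v ⬝ᵥ v := by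
  rw [vnorm, Real.sq_sqrt (by positivity)]
  simp only [dotProduct, sq]

lemma vnorm_nonneg {n : ℕ} (v : Fin n → ℝ) : 0 ≤ vnorm v :=
  Real.sqrt_nonneg _

lemma frobNorm_nonneg {n : ℕ} (A : Matrix (Fin n) (Fin n) ℝ) : 0 ≤ frobNorm A :=
  Real.sqrt_nonneg _

lemma frobNorm_sq {n : ℕ} (A : Matrix (Fin n) (Fin n) ℝ) :
    frobNorm A ^ 2 = ∑ i, ∑ j, A i j ^ 2 :=
  Real.sq_sqrt (by positivity)

lemma vnorm_eq_norm_toLp {n : ℕ} (v : Fin n → ℝ) : vnorm v = ‖WithLp.toLp 2 v‖ := by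
  simp [vnorm, EuclideanSpace.norm_eq, Real.norm_eq_abs, sq_abs]

lemma vnorm_mulVec_le_specNorm_mul {n : ℕ} (A : Matrix (Fin n) (Fin n) ℝ) (y : Fin n → ℝ) :
    vnorm (A *ᵥ y) ≤ specNorm A * vnorm y := by
  simpa only [vnorm_eq_norm_toLp, specNorm, toEuclideanCLM_toLp]
    using (toEuclideanCLM (𝕜 := ℝ) A).le_opNorm (WithLp.toLp 2 y)

lemma vnorm_mulVec_le_frobNorm_mul {n : ℕ} (A : Matrix (Fin n) (Fin n) ℝ) (y : Fin n → ℝ) :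
    vnorm (A *ᵥ y) ≤ frobNorm A * vnorm y := by
  rw [vnorm, frobNorm, vnorm, ← Real.sqrt_mul (by positivity), Finset.sum_mul]
  refine Real.sqrt_le_sqrt (Finset.sum_le_sum fun i _ => ?_)
  simpa [mulVec, dotProduct] using Finset.sum_mul_sq_le_sq_mul_sq Finset.univ (A i) y

lemma abs_dotProduct_le_vnorm_mul {n : ℕ} (a b : Fin n → ℝ) :
    |a ⬝ᵥ b| ≤ vnorm a * vnorm b := by
  rw [← Real.sqrt_sq_eq_abs, vnorm, vnorm, ← Real.sqrt_mul (by positivity)]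
  exact Real.sqrt_le_sqrt (by simpa [dotProduct] using Finset.sum_mul_sq_le_sq_mul_sq _ a b)

lemma frobNorm_add_smul_vecMulVec_sq {n : ℕ} (A : Matrix (Fin n) (Fin n) ℝ)
    (w y : Fin n → ℝ) (c : ℝ) :
    frobNorm (A + c • vecMulVec w y) ^ 2
      = frobNorm A ^ 2 + 2 * c * (w ⬝ᵥ (A *ᵥ y)) + c ^ 2 * (w ⬝ᵥ w) * (y ⬝ᵥ y) := by
  rw [mul_right_comm _ (w ⬝ᵥ w)]
  simp only [frobNorm_sq, Matrix.add_apply, Matrix.smul_apply, vecMulVec_apply, smul_eq_mul,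
    dotProduct, mulVec, Finset.mul_sum, Finset.sum_mul, ← Finset.sum_add_distrib]
  exact Finset.sum_congr rfl fun i _ => Finset.sum_congr rfl fun j _ => by ring

theorem sub_eq_intJac_mulVec {n : ℕ} {F : (Fin n → ℝ) → (Fin n → ℝ)}
    {J : (Fin n → ℝ) → Matrix (Fin n) (Fin n) ℝ}
    (hF : ∀ z, HasFDerivAt F (LinearMap.toContinuousLinearMap ((J z).mulVecLin)) z)
    (hJc : Continuous J) (x u : Fin n → ℝ) :
    F (x + u) - F x = intJac J x u *ᵥ u := by
  funext i
  have hderiv (t : ℝ) :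
      HasDerivAt (fun t : ℝ => F (x + t • u) i) ((J (x + t • u) *ᵥ u) i) t := by
    have hline : HasDerivAt (fun t : ℝ => x + t • u) u t := by
      simpa using ((hasDerivAt_id t).smul_const u).const_add x
    exact hasDerivAt_pi.1 ((hF _).comp_hasDerivAt t hline) i
  have hterm (j : Fin n) : Continuous fun t : ℝ => J (x + t • u) i j * u j := by fun_prop
  calc F (x + u) i - F x i = ∫ t in (0:ℝ)..1, (J (x + t • u) *ᵥ u) i := by
        rw [intervalIntegral.integral_eq_sub_of_hasDerivAt (fun t _ => hderiv t)]
        · simp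
        · simp only [mulVec, dotProduct]
          exact (continuous_finsetSum _ fun j _ => hterm j).intervalIntegrable 0 1
    _ = (intJac J x u *ᵥ u) i := by
        simp only [mulVec, dotProduct, intJac, of_apply]
        rw [intervalIntegral.integral_finsetSum fun j _ => (hterm j).intervalIntegrable 0 1]
        simp only [intervalIntegral.integral_mul_const]

section BadBroydenUpdate

variable {n : ℕ} (A B : Matrix (Fin n) (Fin n) ℝ) (y : Fin n → ℝ)

theorem frobNorm_add_inv_smul_vecMulVec_sq :
    frobNorm (A + (y ⬝ᵥ y)⁻¹ • vecMulVec ((B - A) *ᵥ y) y) ^ 2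
      = frobNorm A ^ 2 - (y ⬝ᵥ y)⁻¹ * vnorm ((B - A) *ᵥ y) ^ 2
        + 2 * (y ⬝ᵥ y)⁻¹ * (((B - A) *ᵥ y) ⬝ᵥ (B *ᵥ y)) := by
  have hA : A *ᵥ y = B *ᵥ y - (B - A) *ᵥ y := by rw [sub_mulVec, sub_sub_cancel]
  have hsq : (y ⬝ᵥ y)⁻¹ ^ 2 * (y ⬝ᵥ y) = (y ⬝ᵥ y)⁻¹ := by
    simpa only [inv_inv, sq, mul_right_comm] using mul_inv_mul_cancel (y ⬝ᵥ y)⁻¹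
  rw [frobNorm_add_smul_vecMulVec_sq, vnorm_sq, hA, dotProduct_sub, mul_right_comm _ (_ ⬝ᵥ _), hsq]
  ring

theorem dotProduct_sub_mulVec_le :
    ((B - A) *ᵥ y) ⬝ᵥ (B *ᵥ y)
      ≤ (frobNorm A * specNorm B + specNorm B ^ 2) * (y ⬝ᵥ y) :=
  calc ((B - A) *ᵥ y) ⬝ᵥ (B *ᵥ y) = vnorm (B *ᵥ y) ^ 2 - (A *ᵥ y) ⬝ᵥ (B *ᵥ y) := by
        rw [sub_mulVec, sub_dotProduct, vnorm_sq]
    _ ≤ vnorm (B *ᵥ y) ^ 2 + vnorm (A *ᵥ y) * vnorm (B *ᵥ y) := by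
        linarith [neg_abs_le ((A *ᵥ y) ⬝ᵥ (B *ᵥ y)), abs_dotProduct_le_vnorm_mul (A *ᵥ y) (B *ᵥ y)]
    _ ≤ (specNorm B * vnorm y) ^ 2 + (frobNorm A * vnorm y) * (specNorm B * vnorm y) := by
        have hb := vnorm_mulVec_le_specNorm_mul B y
        refine add_le_add (pow_le_pow_left₀ (vnorm_nonneg _) hb 2)
          (mul_le_mul (vnorm_mulVec_le_frobNorm_mul A y) hb (vnorm_nonneg _) ?_)
        exact mul_nonneg (frobNorm_nonneg A) (vnorm_nonneg y)
    _ = (frobNorm A * specNorm B + specNorm B ^ 2) * (y ⬝ᵥ y) := by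
        rw [← vnorm_sq]
        ring

theorem frobNorm_add_inv_smul_vecMulVec_sq_le :
    frobNorm (A + (y ⬝ᵥ y)⁻¹ • vecMulVec ((B - A) *ᵥ y) y) ^ 2
      ≤ frobNorm A ^ 2 - vnorm ((B - A) *ᵥ y) ^ 2 / vnorm y ^ 2
        + 2 * (frobNorm A * specNorm B + specNorm B ^ 2) := by
  have hC : 0 ≤ frobNorm A * specNorm B + specNorm B ^ 2 :=
    add_nonneg (mul_nonneg (frobNorm_nonneg A) (norm_nonneg _)) (sq_nonneg _)
  have hcross : (y ⬝ᵥ y)⁻¹ * (((B - A) *ᵥ y) ⬝ᵥ (B *ᵥ y))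
      ≤ frobNorm A * specNorm B + specNorm B ^ 2 :=
    calc _ ≤ (y ⬝ᵥ y)⁻¹ * ((frobNorm A * specNorm B + specNorm B ^ 2) * (y ⬝ᵥ y)) :=
          mul_le_mul_of_nonneg_left (dotProduct_sub_mulVec_le A B y)
            (inv_nonneg.2 (vnorm_sq y ▸ sq_nonneg _))
      _ = (frobNorm A * specNorm B + specNorm B ^ 2) * ((y ⬝ᵥ y)⁻¹ * (y ⬝ᵥ y)) := by ring
      _ ≤ frobNorm A * specNorm B + specNorm B ^ 2 := mul_le_of_le_one_right hC inv_mul_le_one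
  rw [frobNorm_add_inv_smul_vecMulVec_sq, vnorm_sq y, div_eq_inv_mul]
  linarith

end BadBroydenUpdate

theorem stmt10_general {n : ℕ} (F : (Fin n → ℝ) → (Fin n → ℝ))
    (J : (Fin n → ℝ) → Matrix (Fin n) (Fin n) ℝ)
    (hF : ∀ z, HasFDerivAt F (LinearMap.toContinuousLinearMap ((J z).mulVecLin)) z)
    (hJc : Continuous J)
    (xs : Fin n → ℝ)
    (x : ℕ → Fin n → ℝ) (H : ℕ → Matrix (Fin n) (Fin n) ℝ)
    (hH : ∀ k, H (k + 1) = H k +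
        ((F (x (k + 1)) - F (x k)) ⬝ᵥ (F (x (k + 1)) - F (x k)))⁻¹ •
          vecMulVec (x (k + 1) - x k - H k *ᵥ (F (x (k + 1)) - F (x k)))
            (F (x (k + 1)) - F (x k))) :
    ∀ k : ℕ, IsUnit (intJac J (x k) (x (k + 1) - x k)).det →
      frobNorm (J xs * (H (k + 1) - (J xs)⁻¹)) ^ 2 ≤
        frobNorm (J xs * (H k - (J xs)⁻¹)) ^ 2
          - vnorm (J xs *ᵥ (((intJac J (x k) (x (k + 1) - x k))⁻¹ - H k) *ᵥ
                (F (x (k + 1)) - F (x k)))) ^ 2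
              / vnorm (F (x (k + 1)) - F (x k)) ^ 2
          + 2 * (frobNorm (J xs * (H k - (J xs)⁻¹)) *
                specNorm (J xs * ((intJac J (x k) (x (k + 1) - x k))⁻¹ - (J xs)⁻¹))
              + specNorm (J xs * ((intJac J (x k) (x (k + 1) - x k))⁻¹ - (J xs)⁻¹)) ^ 2) := by
  intro k hJk
  have hHk := hH k
  set u := x (k + 1) - x k
  set y := F (x (k + 1)) - F (x k)
  set Jk := intJac J (x k) u
  have hy : y = Jk *ᵥ u := by
    simpa only [u, add_sub_cancel] using sub_eq_intJac_mulVec hF hJc (x k) u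
  have hu : u = Jk⁻¹ *ᵥ y := by rw [hy, mulVec_mulVec, nonsing_inv_mul _ hJk, one_mulVec]
  have hcorr : J xs *ᵥ ((Jk⁻¹ - H k) *ᵥ y)
      = (J xs * (Jk⁻¹ - (J xs)⁻¹) - J xs * (H k - (J xs)⁻¹)) *ᵥ y := by
    rw [mulVec_mulVec, ← Matrix.mul_sub, sub_sub_sub_cancel_right]
  have hupdate : J xs * (H (k + 1) - (J xs)⁻¹) = J xs * (H k - (J xs)⁻¹)
      + (y ⬝ᵥ y)⁻¹ • vecMulVec (J xs *ᵥ ((Jk⁻¹ - H k) *ᵥ y)) y := by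
    rw [hHk, add_sub_right_comm, Matrix.mul_add, Matrix.mul_smul, mul_vecMulVec, hu, sub_mulVec]
  rw [hupdate, hcorr]
  exact frobNorm_add_inv_smul_vecMulVec_sq_le _ _ y

/-- One-step Frobenius-measure inequality for Broyden's "bad" update:
`τ_{k+1}² ≤ τ_k² − ‖J*(J_k⁻¹ − H_k)y_k‖²/‖y_k‖² + 2(τ_k‖J̃_k‖ + ‖J̃_k‖²)` whenever the
averaged Jacobian `J_k` is nonsingular. -/
theorem stmt10 {n : ℕ} (F : (Fin n → ℝ) → (Fin n → ℝ))
    (J : (Fin n → ℝ) → Matrix (Fin n) (Fin n) ℝ)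
    (hF : ∀ z, HasFDerivAt F (LinearMap.toContinuousLinearMap ((J z).mulVecLin)) z)
    (hJc : Continuous J)
    (xs : Fin n → ℝ) (hxs : F xs = 0) (hJs : IsUnit (J xs).det)
    (x : ℕ → Fin n → ℝ) (H : ℕ → Matrix (Fin n) (Fin n) ℝ)
    (hHk : ∀ k, IsUnit (H k).det) (hFk : ∀ k, F (x k) ≠ 0)
    (hyk : ∀ k, F (x (k + 1)) - F (x k) ≠ 0)
    (hx : ∀ k, x (k + 1) = x k - H k *ᵥ F (x k))
    (hH : ∀ k, H (k + 1) = H k +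
        ((F (x (k + 1)) - F (x k)) ⬝ᵥ (F (x (k + 1)) - F (x k)))⁻¹ •
          vecMulVec (x (k + 1) - x k - H k *ᵥ (F (x (k + 1)) - F (x k)))
            (F (x (k + 1)) - F (x k))) :
    ∀ k : ℕ, IsUnit (intJac J (x k) (x (k + 1) - x k)).det →
      frobNorm (J xs * (H (k + 1) - (J xs)⁻¹)) ^ 2 ≤
        frobNorm (J xs * (H k - (J xs)⁻¹)) ^ 2
          - vnorm (J xs *ᵥ (((intJac J (x k) (x (k + 1) - x k))⁻¹ - H k) *ᵥ
                (F (x (k + 1)) - F (x k)))) ^ 2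
              / vnorm (F (x (k + 1)) - F (x k)) ^ 2
          + 2 * (frobNorm (J xs * (H k - (J xs)⁻¹)) *
                specNorm (J xs * ((intJac J (x k) (x (k + 1) - x k))⁻¹ - (J xs)⁻¹))
              + specNorm (J xs * ((intJac J (x k) (x (k + 1) - x k))⁻¹ - (J xs)⁻¹)) ^ 2) :=
  stmt10_general F J hF hJc xs x H hH
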